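/- Let D be a directed acyclic graph with s, t ∈ V(D), and let G be the directed bipartite graph with vertex set {v_L, v_R : v ∈ V(D)} and edges u_L→v_R and u_R→v_L for each edge u→v of D. If X ⊆ E(G) is a set of edges such that every directed s_L→t_R path in G uses an edge of X, then the set F := {uv ∈ E(D) : u_L v_R ∈ X or u_R v_L ∈ X} intersects every odd-length directed s→t path in D. -/

import Mathlib

/-- A (simple) directed path in the directed graph `G`, represented as a nonempty
list of pairwise distinct vertices in which every consecutive pair is an edge of `G`. -/
def IsPath {V : Type*} (G : V → V → Prop) (p : List V) : Prop :=
  p ≠ [] ∧ p.Chain' G ∧ p.Nodup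

/-- `p` is a directed path from `u` to `v` in `G`. -/
def IsPathFrom {V : Type*} (G : V → V → Prop) (u v : V) (p : List V) : Prop :=
  IsPath G p ∧ p.head? = some u ∧ p.getLast? = some v

/-- The length (number of edges) of a path, given as its list of vertices. -/
def pathLen {V : Type*} (p : List V) : ℕ := p.length - 1

/-- The list of directed edges traversed by a path. -/
def edgesOf {V : Type*} (p : List V) : List (V × V) := p.zip p.tail

/-- A directed graph is acyclic (a DAG) if no vertex lies on a directed cycle. -/
def Acyclic {V : Type*} (G : V → V → Prop) : Prop :=
  ∀ v, ¬ Relation.TransGen G v v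

/-- The graph obtained from `G` by deleting the vertex set `M`. -/
def delV {V : Type*} (G : V → V → Prop) (M : Set V) : V → V → Prop :=
  fun a b => G a b ∧ a ∉ M ∧ b ∉ M

/-- The bipartite double cover of a directed graph `D`: vertices `Sum.inl v`
(playing the role of `v_L`) and `Sum.inr v` (playing the role of `v_R`), with
edges `u_L → v_R` and `u_R → v_L` for every edge `u → v` of `D`. -/
def biparLift {V : Type*} (D : V → V → Prop) : V ⊕ V → V ⊕ V → Prop
  | Sum.inl u, Sum.inr v => D u v
  | Sum.inr u, Sum.inl v => D u v
  | _, _ => False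

/-!
Lift an odd `s → t` path `s = v₀ v₁ … v_k = t` of `D` to `G` by alternating sides,
`v₀_L v₁_R v₂_L …`; since `k` is odd it ends at `t_R`, so it is an `s_L → t_R` path and
meets `X` in some edge `u_L v_R` or `u_R v_L`, whose projection `uv` is an edge of the
original path lying in `F`.
-/

def altLift {V : Type*} : Bool → List V → List (V ⊕ V)
  | _, [] => []
  | b, v :: l => (if b then Sum.inr v else Sum.inl v) :: altLift (!b) l

section

variable {V : Type*}

theorem biparLift_iff {D : V → V → Prop} {a b : V ⊕ V} :
    biparLift D a b ↔ ∃ u v, D u v ∧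
      (a = Sum.inl u ∧ b = Sum.inr v ∨ a = Sum.inr u ∧ b = Sum.inl v) := by
  rcases a with u | u <;> rcases b with v | v <;> simp [biparLift]

theorem edgesOf_map {W : Type*} (f : V → W) (l : List V) :
    edgesOf (l.map f) = (edgesOf l).map (Prod.map f f) := by
  simp only [edgesOf, ← List.map_tail, List.zip_map]

theorem rel_of_mem_edgesOf {G : V → V → Prop} {l : List V} (hl : l.IsChain G) {e : V × V}
    (he : e ∈ edgesOf l) : G e.1 e.2 := by
  induction l with
  | nil => simp [edgesOf] at he
  | cons a l ih =>
    cases l with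
    | nil => simp [edgesOf] at he
    | cons b l =>
      rw [List.isChain_cons_cons] at hl
      rcases List.mem_cons.1 he with rfl | he
      · exact hl.1
      · exact ih hl.2 he

theorem map_elim_altLift (b : Bool) (l : List V) :
    (altLift b l).map (Sum.elim id id) = l := by
  induction l generalizing b with
  | nil => rfl
  | cons a l ih => cases b <;> simp [altLift, ih]

theorem isChain_altLift {D : V → V → Prop} {l : List V} (hl : l.IsChain D) (b : Bool) :
    (altLift b l).IsChain (biparLift D) := by
  induction l generalizing b with
  | nil => exact List.isChain_nil
  | cons a l ih =>
    cases l with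
    | nil => exact List.isChain_singleton _
    | cons c l =>
      rw [List.isChain_cons_cons] at hl
      refine List.isChain_cons_cons.2 ⟨?_, ih hl.2 (!b)⟩
      cases b <;> simpa [altLift, biparLift] using hl.1

theorem altLift_concat (b : Bool) (l : List V) (x : V) :
    altLift b (l ++ [x]) = altLift b l ++ altLift (b ^^ decide (l.length % 2 = 1)) [x] := by
  induction l generalizing b with
  | nil => simp [altLift]
  | cons a l ih =>
    rcases Nat.mod_two_eq_zero_or_one l.length with h | h <;> cases b <;>
      simp [altLift, ih, h, Nat.succ_mod_two_eq_one_iff]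

theorem isPathFrom_altLift {D : V → V → Prop} {s t : V} {p : List V}
    (hp : IsPathFrom D s t p) (hodd : Odd (pathLen p)) :
    IsPathFrom (biparLift D) (Sum.inl s) (Sum.inr t) (altLift false p) := by
  obtain ⟨⟨hne, hchain, hnd⟩, hhead, hlast⟩ := hp
  have hmap := map_elim_altLift false p
  refine ⟨⟨?_, isChain_altLift hchain false, .of_map _ (hmap ▸ hnd)⟩, ?_, ?_⟩
  · intro h
    exact hne (by rw [← hmap, h, List.map_nil])
  · obtain ⟨a, l, rfl⟩ := List.exists_cons_of_ne_nil hne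
    simp_all [altLift]
  · obtain ⟨l, x, rfl⟩ := (List.eq_nil_or_concat p).resolve_left hne
    have hlen : l.length % 2 = 1 := by simpa [pathLen, Nat.odd_iff] using hodd
    simp_all [altLift_concat, altLift]

end

theorem projected_cut_blocks_odd_paths_general {V : Type*} (D : V → V → Prop)
    (s t : V) (X : Set ((V ⊕ V) × (V ⊕ V)))
    (hX : ∀ q, IsPathFrom (biparLift D) (Sum.inl s) (Sum.inr t) q →
      ∃ e ∈ edgesOf q, e ∈ X) :
    ∀ p, IsPathFrom D s t p → Odd (pathLen p) →
      ∃ e ∈ edgesOf p, e ∈ {e : V × V | D e.1 e.2 ∧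
        ((Sum.inl e.1, Sum.inr e.2) ∈ X ∨ (Sum.inr e.1, Sum.inl e.2) ∈ X)} := by
  intro p hp hodd
  have hq := isPathFrom_altLift hp hodd
  obtain ⟨⟨a, b⟩, he, heX⟩ := hX _ hq
  have hproj : (Sum.elim id id a, Sum.elim id id b) ∈ edgesOf p := by
    rw [← map_elim_altLift false p, edgesOf_map]
    exact List.mem_map_of_mem he
  obtain ⟨u, v, huv, ⟨rfl, rfl⟩ | ⟨rfl, rfl⟩⟩ :=
    biparLift_iff.1 (rel_of_mem_edgesOf hq.1.2.1 he)
  · exact ⟨(u, v), hproj, huv, .inl heX⟩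
  · exact ⟨(u, v), hproj, huv, .inr heX⟩

/-- **(Feasibility of the projected cut, Claim 3.4.)**
Let `D` be a DAG with `s, t ∈ V(D)` and let `G = biparLift D` be its bipartite
double cover.  If `X ⊆ E(G)` is such that every directed `s_L → t_R` path of
`G` uses an edge of `X`, then
`F = {uv ∈ E(D) : u_L v_R ∈ X or u_R v_L ∈ X}` intersects every odd-length
directed `s → t` path of `D`. -/
theorem projected_cut_blocks_odd_paths {V : Type*} (D : V → V → Prop)
    (hD : Acyclic D) (s t : V) (X : Set ((V ⊕ V) × (V ⊕ V)))
    (hXE : ∀ e ∈ X, biparLift D e.1 e.2)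
    (hX : ∀ q, IsPathFrom (biparLift D) (Sum.inl s) (Sum.inr t) q →
      ∃ e ∈ edgesOf q, e ∈ X) :
    ∀ p, IsPathFrom D s t p → Odd (pathLen p) →
      ∃ e ∈ edgesOf p, e ∈ {e : V × V | D e.1 e.2 ∧
        ((Sum.inl e.1, Sum.inr e.2) ∈ X ∨ (Sum.inr e.1, Sum.inl e.2) ∈ X)} :=
  projected_cut_blocks_odd_paths_general D s t X hX
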